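/- arXiv:1902.07421 — 3 statements merged into one kernel-verified Lean document; each statement's English description precedes it below -/
import Mathlib

section
/- Let (C, K) be a cotorsion pair in an exact category B with C rigid (i.e., Ext¹_B(C, C) = 0). Then the subcategory H = CoCone(C, C) is closed under direct summands. -/
/-!
Let `X ≅ A ⊞ Y` with `X ↣ C₁ ↠ C₂` a conflation with ends in `C`, and take conflations
`A ↣ V ↠ U`, `Y ↣ V' ↠ U'` with `V, V' ∈ K` and `U, U' ∈ C`; it suffices to show `V ∈ C`.
Put `W = V ⊞ V'` and `f : X ↣ W`. Since `Ext¹(C₂, W) = 0`, `f` extends along `j : X ↣ C₁`;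
by rigidity `Ext¹(U ⊞ U', C₁) = 0`, so `j` extends along `f`. Hence the inflation
`(j, f) : X ↣ C₁ ⊞ W` has both `C₂ ⊞ W` and `(U ⊞ U') ⊞ C₁` as cokernels. The latter lies in
`C`, which is closed under sums and summands, so `W` and then `V` lie in `C`.
-/

open CategoryTheory Limits ZeroObject

universe v u

variable (B : Type u)

/-- A (Quillen) exact structure on an additive category: a distinguished class of
kernel–cokernel pairs (short exact sequences), satisfying the exact category axioms. -/
structure ExactStr [Category.{v} B] [Preadditive B] [HasZeroObject B]
    [HasBinaryBiproducts B] where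
  isSES : ∀ ⦃X Y Z : B⦄, (X ⟶ Y) → (Y ⟶ Z) → Prop
  comp_eq_zero : ∀ {X Y Z : B} {i : X ⟶ Y} {d : Y ⟶ Z}, isSES i d → i ≫ d = 0
  is_kernel : ∀ {X Y Z : B} {i : X ⟶ Y} {d : Y ⟶ Z}, isSES i d →
      ∀ {W : B} (f : W ⟶ Y), f ≫ d = 0 → ∃! g : W ⟶ X, g ≫ i = f
  is_cokernel : ∀ {X Y Z : B} {i : X ⟶ Y} {d : Y ⟶ Z}, isSES i d →
      ∀ {W : B} (f : Y ⟶ W), i ≫ f = 0 → ∃! g : Z ⟶ W, d ≫ g = f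
  iso_closed : ∀ {X Y Z X' Y' Z' : B} {i : X ⟶ Y} {d : Y ⟶ Z}
      (eX : X' ≅ X) (eY : Y' ≅ Y) (eZ : Z' ≅ Z), isSES i d →
      isSES (eX.hom ≫ i ≫ eY.inv) (eY.hom ≫ d ≫ eZ.inv)
  id_isSES : ∀ X : B, isSES (𝟙 X) (0 : X ⟶ 0)
  infl_comp : ∀ {X Y Z : B} (i : X ⟶ Y) (i' : Y ⟶ Z),
      (∃ (W : B) (d : Y ⟶ W), isSES i d) → (∃ (W : B) (d : Z ⟶ W), isSES i' d) →
      ∃ (W : B) (d : Z ⟶ W), isSES (i ≫ i') d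
  defl_comp : ∀ {X Y Z : B} (d : X ⟶ Y) (d' : Y ⟶ Z),
      (∃ (W : B) (i : W ⟶ X), isSES i d) → (∃ (W : B) (i : W ⟶ Y), isSES i d') →
      ∃ (W : B) (i : W ⟶ X), isSES i (d ≫ d')
  pullback_defl : ∀ {X Y Z Z' : B} {i : X ⟶ Y} {d : Y ⟶ Z}, isSES i d →
      ∀ (f : Z' ⟶ Z), ∃ (Y' : B) (i' : X ⟶ Y') (d' : Y' ⟶ Z') (g : Y' ⟶ Y),
        isSES i' d' ∧ g ≫ d = d' ≫ f ∧ i' ≫ g = i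
  pushout_infl : ∀ {X Y Z X' : B} {i : X ⟶ Y} {d : Y ⟶ Z}, isSES i d →
      ∀ (f : X ⟶ X'), ∃ (Y' : B) (i' : X' ⟶ Y') (d' : Y' ⟶ Z) (g : Y ⟶ Y'),
        isSES i' d' ∧ i ≫ g = f ≫ i' ∧ g ≫ d' = d

variable {B} [Category.{v} B] [Preadditive B] [HasZeroObject B]
  [HasFiniteBiproducts B] [HasBinaryBiproducts B]

/-- An object is indecomposable if it is nonzero and any biproduct decomposition is trivial. -/
def Indec (X : B) : Prop :=
  ¬ IsZero X ∧ ∀ (A Y : B), Nonempty (X ≅ A ⊞ Y) → IsZero A ∨ IsZero Y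

/-- `A` is a direct summand of `X`. -/
def IsSummand (A X : B) : Prop := ∃ Y : B, Nonempty (X ≅ A ⊞ Y)

/-- A class of objects is closed under direct summands. -/
def SummandClosed (S : Set B) : Prop := ∀ A X : B, X ∈ S → IsSummand A X → A ∈ S

/-- `X` has no nonzero direct summand belonging to `S`. -/
def NoSummandIn (S : Set B) (X : B) : Prop :=
  ∀ A : B, IsSummand A X → A ∈ S → IsZero A

/-- Krull–Schmidt: every object is a finite biproduct of indecomposables with local
endomorphism rings. -/
def IsKrullSchmidt : Prop :=
  ∀ X : B, ∃ (n : ℕ) (f : Fin n → B),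
    (∀ i, Indec (f i) ∧ IsLocalRing (End (f i))) ∧ Nonempty (X ≅ ⨁ f)

namespace ExactStr

variable (E : ExactStr B)

/-- Projective object relative to the exact structure. -/
def Proj (P : B) : Prop :=
  ∀ ⦃X Y Z : B⦄ (i : X ⟶ Y) (d : Y ⟶ Z), E.isSES i d →
    ∀ f : P ⟶ Z, ∃ g : P ⟶ Y, g ≫ d = f

/-- Injective object relative to the exact structure. -/
def Inj (I : B) : Prop :=
  ∀ ⦃X Y Z : B⦄ (i : X ⟶ Y) (d : Y ⟶ Z), E.isSES i d →
    ∀ f : X ⟶ I, ∃ g : Y ⟶ I, i ≫ g = f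

def projObjs : Set B := {P | E.Proj P}
def injObjs : Set B := {I | E.Inj I}

def EnoughProj : Prop :=
  ∀ X : B, ∃ (P K : B) (i : K ⟶ P) (d : P ⟶ X), E.Proj P ∧ E.isSES i d

def EnoughInj : Prop :=
  ∀ X : B, ∃ (I C : B) (i : X ⟶ I) (d : I ⟶ C), E.Inj I ∧ E.isSES i d

/-- `Ext¹(X, Y) = 0`: every conflation `Y ↣ M ↠ X` splits. -/
def Ext1Zero (X Y : B) : Prop :=
  ∀ ⦃M : B⦄ (i : Y ⟶ M) (d : M ⟶ X), E.isSES i d → ∃ s : X ⟶ M, s ≫ d = 𝟙 X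

/-- `CoCone(S, T)`: objects `X` admitting a conflation `X ↣ S' ↠ T'`. -/
def CoCone (S T : Set B) : Set B :=
  {X | ∃ (S' T' : B) (i : X ⟶ S') (d : S' ⟶ T'), S' ∈ S ∧ T' ∈ T ∧ E.isSES i d}

/-- `Cone(S, T)`: objects `X` admitting a conflation `S' ↣ T' ↠ X`. -/
def Cone (S T : Set B) : Set B :=
  {X | ∃ (S' T' : B) (i : S' ⟶ T') (d : T' ⟶ X), S' ∈ S ∧ T' ∈ T ∧ E.isSES i d}

/-- `Ω S = CoCone(𝒫, S)`, the class of syzygies of objects of `S`. -/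
def OmegaSet (S : Set B) : Set B := E.CoCone E.projObjs S

/-- `Σ S = Cone(S, ℐ)`, the class of cosyzygies of objects of `S`. -/
def SigmaSet (S : Set B) : Set B := E.Cone S E.injObjs

/-- Iterated syzygy class `Ω^n S`. -/
def OmegaIter : ℕ → Set B → Set B
  | 0, S => S
  | n + 1, S => E.OmegaSet (OmegaIter n S)

/-- A class `S` is closed under extensions. -/
def ExtClosed (S : Set B) : Prop :=
  ∀ {A M C : B} (i : A ⟶ M) (d : M ⟶ C), E.isSES i d → A ∈ S → C ∈ S → M ∈ S

/-- `pd_B X ≤ n` in the exact category. -/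
def pdLE : ℕ → B → Prop
  | 0, X => E.Proj X
  | n + 1, X => ∃ (K P : B) (i : K ⟶ P) (d : P ⟶ X),
      E.Proj P ∧ E.isSES i d ∧ pdLE n K

/-- `ExtNZero n X Y` says `Ext^{n+1}(X, Y) = 0` (via dimension shifting along any
projective presentation). -/
def ExtNZero : ℕ → B → B → Prop
  | 0, X, Y => E.Ext1Zero X Y
  | n + 1, X, Y => ∀ (OX P : B) (i : OX ⟶ P) (d : P ⟶ X),
      E.Proj P → E.isSES i d → ExtNZero n OX Y

/-- `Ext^j(X, Y) = 0` for all `1 ≤ j ≤ m`. -/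
def ExtVanishUpTo (m : ℕ) (X Y : B) : Prop := ∀ i < m, E.ExtNZero i X Y

end ExactStr

/-- A cotorsion pair `(U, V)` on the exact category. -/
structure CotorsionPair (E : ExactStr B) (U V : Set B) : Prop where
  summandClosed_left : SummandClosed U
  summandClosed_right : SummandClosed V
  ext : ∀ ⦃X : B⦄, X ∈ U → ∀ ⦃Y : B⦄, Y ∈ V → E.Ext1Zero X Y
  resolve : ∀ X : B, ∃ (VB UB : B) (i : VB ⟶ UB) (d : UB ⟶ X),
      UB ∈ U ∧ VB ∈ V ∧ E.isSES i d
  coresolve : ∀ X : B, ∃ (VB UB : B) (i : X ⟶ VB) (d : VB ⟶ UB),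
      UB ∈ U ∧ VB ∈ V ∧ E.isSES i d

/-- A fully rigid cotorsion pair: `C` is rigid, strictly contains the projectives,
and every indecomposable object lies in `K` or in `H = CoCone(C, C)`. -/
structure FullyRigid (E : ExactStr B) (C K : Set B) : Prop where
  cp : CotorsionPair E C K
  rigid : ∀ ⦃X : B⦄, X ∈ C → ∀ ⦃Y : B⦄, Y ∈ C → E.Ext1Zero X Y
  nonproj : ∃ X ∈ C, ¬ E.Proj X
  indec_mem : ∀ X : B, Indec X → X ∈ K ∨ X ∈ E.CoCone C C

/-- A morphism factors through an object of `S`. -/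
def FactorsThru (S : Set B) {X Y : B} (f : X ⟶ Y) : Prop :=
  ∃ Z : B, Z ∈ S ∧ ∃ (g : X ⟶ Z) (h : Z ⟶ Y), f = g ≫ h

/-- The ideal-quotient relation: two morphisms are identified iff their difference
factors through an object of `S`. -/
def quotRel (S : Set B) : HomRel B := fun {X Y} (f g : X ⟶ Y) => FactorsThru S (f - g)

/-- The quotient category `B/S`. -/
abbrev QuotCat (S : Set B) := CategoryTheory.Quotient (quotRel S)

/-- Projective dimension at most `n` in an abelian category. -/
def pdLEQ {Q : Type*} [Category Q] [Abelian Q] : ℕ → Q → Prop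
  | 0, X => Projective X
  | n + 1, X => ∃ (K P : Q) (i : K ⟶ P) (d : P ⟶ X) (w : i ≫ d = 0),
      Projective P ∧ (ShortComplex.mk i d w).ShortExact ∧ pdLEQ n K

/-- Injective dimension at most `n` in an abelian category. -/
def idLEQ {Q : Type*} [Category Q] [Abelian Q] : ℕ → Q → Prop
  | 0, X => Injective X
  | n + 1, X => ∃ (I C : Q) (i : X ⟶ I) (d : I ⟶ C) (w : i ≫ d = 0),
      Injective I ∧ (ShortComplex.mk i d w).ShortExact ∧ idLEQ n C


set_option linter.unusedSectionVars false

namespace ExactStr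

variable {E : ExactStr B}

section

variable {X M Z : B} {i : X ⟶ M} {d : M ⟶ Z}

theorem mono_of_isSES (h : E.isSES i d) : Mono i :=
  ⟨fun x y hxy => by
    obtain ⟨u, -, hu⟩ := E.is_kernel h (x ≫ i) (by simp [E.comp_eq_zero h])
    rw [hu x rfl, hu y hxy.symm]⟩

theorem epi_of_isSES (h : E.isSES i d) : Epi d :=
  ⟨fun x y hxy => by
    obtain ⟨u, -, hu⟩ := E.is_cokernel h (d ≫ x) (by simp [reassoc_of% E.comp_eq_zero h])
    rw [hu x rfl, hu y hxy.symm]⟩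

noncomputable def isLimitKernelFork (h : E.isSES i d) :
    IsLimit (KernelFork.ofι i (E.comp_eq_zero h)) :=
  have := mono_of_isSES h
  KernelFork.IsLimit.ofι' i _ fun k hk =>
    ⟨(E.is_kernel h k hk).choose, (E.is_kernel h k hk).choose_spec.1⟩

noncomputable def isColimitCokernelCofork (h : E.isSES i d) :
    IsColimit (CokernelCofork.ofπ d (E.comp_eq_zero h)) :=
  have := epi_of_isSES h
  CokernelCofork.IsColimit.ofπ' d _ fun k hk =>
    ⟨(E.is_cokernel h k hk).choose, (E.is_cokernel h k hk).choose_spec.1⟩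

theorem isSES_of_isLimit (h : E.isSES i d) {X' : B} {i' : X' ⟶ M} {w : i' ≫ d = 0}
    (hi' : IsLimit (KernelFork.ofι i' w)) : E.isSES i' d := by
  let e := IsLimit.conePointUniqueUpToIso hi' (isLimitKernelFork h)
  have he : e.hom ≫ i = i' :=
    IsLimit.conePointUniqueUpToIso_hom_comp hi' (isLimitKernelFork h) WalkingParallelPair.zero
  simpa [he] using E.iso_closed e (Iso.refl M) (Iso.refl Z) h

theorem isSES_of_isColimit (h : E.isSES i d) {Z' : B} {d' : M ⟶ Z'} {w : i ≫ d' = 0}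
    (hd' : IsColimit (CokernelCofork.ofπ d' w)) : E.isSES i d' := by
  let e := IsColimit.coconePointUniqueUpToIso (isColimitCokernelCofork h) hd'
  have he : d ≫ e.hom = d' :=
    IsColimit.comp_coconePointUniqueUpToIso_hom (isColimitCokernelCofork h) hd'
      WalkingParallelPair.one
  simpa [he] using E.iso_closed (Iso.refl X) (Iso.refl M) e.symm h

theorem nonempty_iso_of_isSES {Z' : B} {d' : M ⟶ Z'} (h : E.isSES i d) (h' : E.isSES i d') :
    Nonempty (Z ≅ Z') :=
  ⟨IsColimit.coconePointUniqueUpToIso (isColimitCokernelCofork h) (isColimitCokernelCofork h')⟩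

theorem exists_iso_biprod_of_retraction (h : E.isSES i d) {r : M ⟶ X} (hr : i ≫ r = 𝟙 X) :
    ∃ e : M ≅ X ⊞ Z, i ≫ e.hom = biprod.inl ∧ e.inv ≫ d = biprod.snd := by
  have := epi_of_isSES h
  obtain ⟨s, hs, -⟩ := E.is_cokernel h (𝟙 M - r ≫ i) (by simp [reassoc_of% hr])
  have hsd : s ≫ d = 𝟙 Z := by
    rw [← cancel_epi d, reassoc_of% hs]; simp [E.comp_eq_zero h]
  have hsr : s ≫ r = 0 := by
    rw [← cancel_epi d, reassoc_of% hs]; simp [hr]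
  refine ⟨⟨biprod.lift r d, biprod.desc i s, by simp [hs],
    by ext <;> simp [hr, hsd, hsr, E.comp_eq_zero h]⟩, ?_, ?_⟩
  · ext <;> simp [hr, E.comp_eq_zero h]
  · ext <;> simp [hsd, E.comp_eq_zero h]

end

theorem isSES_inl_snd (X W : B) : E.isSES (biprod.inl : X ⟶ X ⊞ W) biprod.snd := by
  obtain ⟨Y, i, d, r, h, -, hr⟩ := E.pullback_defl (E.id_isSES X) (0 : W ⟶ 0)
  obtain ⟨e, hi, hd⟩ := exists_iso_biprod_of_retraction h hr
  simpa [hi, hd] using E.iso_closed (Iso.refl X) e.symm (Iso.refl W) h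

theorem isSES_zero_id (W : B) : E.isSES (0 : (0 : B) ⟶ W) (𝟙 W) := by
  simpa using E.iso_closed (Iso.refl 0) (isoZeroBiprod (isZero_zero B)) (Iso.refl W)
    (isSES_inl_snd 0 W)

variable {X M Z X' M' Z' : B} {i : X ⟶ M} {d : M ⟶ Z} {i' : X' ⟶ M'} {d' : M' ⟶ Z'}

theorem isSES_biprodMap_id_left (h : E.isSES i d) (W : B) :
    E.isSES (biprod.map (𝟙 W) i) (biprod.snd ≫ d) := by
  obtain ⟨K, ι, hK⟩ := E.defl_comp biprod.snd d ⟨W, _, isSES_inl_snd W M⟩ ⟨X, i, h⟩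
  have := mono_of_isSES h
  refine isSES_of_isLimit hK (w := by simp [E.comp_eq_zero h]) <|
    KernelFork.IsLimit.ofι' _ _ fun k hk => ?_
  obtain ⟨l, hl : l ≫ i = k ≫ biprod.snd⟩ :=
    KernelFork.IsLimit.lift' (isLimitKernelFork h) (k ≫ biprod.snd) (by simpa using hk)
  exact ⟨biprod.lift (k ≫ biprod.fst) l, by ext <;> simp [hl]⟩

theorem isSES_biprodMap_id_right (h : E.isSES i d) (W : B) :
    E.isSES (biprod.map i (𝟙 W)) (biprod.fst ≫ d) := by
  convert E.iso_closed (biprod.braiding X W) (biprod.braiding M W) (Iso.refl Z)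
    (isSES_biprodMap_id_left h W) using 1 <;> ext <;> simp

theorem isSES_biprodMap (h : E.isSES i d) (h' : E.isSES i' d') :
    E.isSES (biprod.map i i') (biprod.map d d') := by
  obtain ⟨Q, q, hq⟩ := E.infl_comp (biprod.map i (𝟙 X')) (biprod.map (𝟙 M) i')
    ⟨_, _, isSES_biprodMap_id_right h X'⟩ ⟨_, _, isSES_biprodMap_id_left h' M⟩
  rw [show biprod.map i (𝟙 X') ≫ biprod.map (𝟙 M) i' = biprod.map i i' by
    ext <;> simp] at hq
  have := epi_of_isSES h
  have := epi_of_isSES h'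
  refine isSES_of_isColimit hq
    (w := by ext <;> simp [E.comp_eq_zero h, E.comp_eq_zero h']) <|
    CokernelCofork.IsColimit.ofπ' _ _ fun k hk => ?_
  obtain ⟨l, hl : d ≫ l = biprod.inl ≫ k⟩ := CokernelCofork.IsColimit.desc'
    (isColimitCokernelCofork h) (biprod.inl ≫ k) (by simpa using biprod.inl ≫= hk)
  obtain ⟨l', hl' : d' ≫ l' = biprod.inr ≫ k⟩ := CokernelCofork.IsColimit.desc'
    (isColimitCokernelCofork h') (biprod.inr ≫ k) (by simpa using biprod.inr ≫= hk)
  exact ⟨biprod.desc l l', by ext <;> simp [hl, hl']⟩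

theorem exists_isSES_biprodLift_of_comp_eq {X M Z W : B} {i : X ⟶ M} {d : M ⟶ Z}
    (h : E.isSES i d) {φ : M ⟶ W} {f : X ⟶ W} (hφ : i ≫ φ = f) :
    ∃ q : M ⊞ W ⟶ Z ⊞ W, E.isSES (biprod.lift i f) q := by
  -- the sum of `(i, d)` and `0 ↣ W ↠ W`, sheared by `φ`
  refine ⟨(Biprod.unipotentUpper φ).inv ≫ biprod.map d (𝟙 W), ?_⟩
  convert E.iso_closed (isoBiprodZero (isZero_zero B)) (Biprod.unipotentUpper φ).symm
    (Iso.refl _) (isSES_biprodMap h (isSES_zero_id W)) using 1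
  · ext <;> simp [Biprod.unipotentUpper, ← hφ]
  · simp

theorem nonempty_biprod_iso_of_comp_eq {X M N W U : B} {j : X ⟶ M} {q : M ⟶ N}
    {f : X ⟶ W} {g : W ⟶ U} (hj : E.isSES j q) (hf : E.isSES f g) {φ : M ⟶ W} {ψ : W ⟶ M}
    (hφ : j ≫ φ = f) (hψ : f ≫ ψ = j) : Nonempty (N ⊞ W ≅ U ⊞ M) := by
  obtain ⟨q₁, h₁⟩ := exists_isSES_biprodLift_of_comp_eq hj hφ
  obtain ⟨q₂, h₂⟩ := exists_isSES_biprodLift_of_comp_eq hf hψ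
  have h₂' : E.isSES (biprod.lift j f) ((biprod.braiding M W).hom ≫ q₂) := by
    convert E.iso_closed (Iso.refl X) (biprod.braiding M W) (Iso.refl _) h₂ using 1
    · ext <;> simp
    · simp
  exact nonempty_iso_of_isSES h₁ h₂'

theorem mem_coCone_of_iso {S T : Set B} {X X' : B} (e : X ≅ X') (hX : X ∈ E.CoCone S T) :
    X' ∈ E.CoCone S T := by
  obtain ⟨S', T', i, d, hS', hT', h⟩ := hX
  exact ⟨S', T', e.inv ≫ i, d, hS', hT', by
    simpa using E.iso_closed e.symm (Iso.refl S') (Iso.refl T') h⟩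

namespace Ext1Zero

variable {X M Z : B} {i : X ⟶ M} {d : M ⟶ Z}

theorem exists_retraction (hext : E.Ext1Zero Z X) (h : E.isSES i d) : ∃ r, i ≫ r = 𝟙 X := by
  obtain ⟨s, hs⟩ := hext i d h
  obtain ⟨r, hr, -⟩ := E.is_kernel h (𝟙 M - d ≫ s) (by simp [hs])
  have := mono_of_isSES h
  exact ⟨r, by rw [← cancel_mono i, Category.assoc, hr]; simp [reassoc_of% E.comp_eq_zero h]⟩

theorem of_forall_exists_retraction
    (H : ∀ ⦃M : B⦄ (i : X ⟶ M) (d : M ⟶ Z), E.isSES i d → ∃ r, i ≫ r = 𝟙 X) :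
    E.Ext1Zero Z X := by
  intro M i d h
  obtain ⟨r, hr⟩ := H i d h
  obtain ⟨e, -, he⟩ := exists_iso_biprod_of_retraction h hr
  exact ⟨biprod.inr ≫ e.inv, by simp [he]⟩

theorem exists_comp_eq {W : B} (hext : E.Ext1Zero Z W) (h : E.isSES i d) (f : X ⟶ W) :
    ∃ v : M ⟶ W, i ≫ v = f := by
  obtain ⟨P, i', d', g, hP, hg, -⟩ := E.pushout_infl h f
  obtain ⟨r, hr⟩ := hext.exists_retraction hP
  exact ⟨g ≫ r, by rw [reassoc_of% hg, hr, Category.comp_id]⟩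

theorem biprod_left {Z' W : B} (h₁ : E.Ext1Zero Z W) (h₂ : E.Ext1Zero Z' W) :
    E.Ext1Zero (Z ⊞ Z') W := by
  intro M i d h
  obtain ⟨P₁, i₁, d₁, g₁, hP₁, hg₁, -⟩ := E.pullback_defl h (biprod.inl : Z ⟶ _)
  obtain ⟨P₂, i₂, d₂, g₂, hP₂, hg₂, -⟩ := E.pullback_defl h (biprod.inr : Z' ⟶ _)
  obtain ⟨s₁, hs₁⟩ := h₁ i₁ d₁ hP₁
  obtain ⟨s₂, hs₂⟩ := h₂ i₂ d₂ hP₂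
  exact ⟨biprod.desc (s₁ ≫ g₁) (s₂ ≫ g₂), by
    ext <;> simp [hg₁, hg₂, reassoc_of% hs₁, reassoc_of% hs₂]⟩

theorem biprod_right {W W' : B} (h₁ : E.Ext1Zero Z W) (h₂ : E.Ext1Zero Z W') :
    E.Ext1Zero Z (W ⊞ W') :=
  of_forall_exists_retraction fun _ i _ h => by
    obtain ⟨v, hv⟩ := h₁.exists_comp_eq h biprod.fst
    obtain ⟨v', hv'⟩ := h₂.exists_comp_eq h biprod.snd
    exact ⟨biprod.lift v v', by ext <;> simp [hv, hv']⟩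

end Ext1Zero

end ExactStr

open ExactStr

namespace CotorsionPair

variable {E : ExactStr B} {C K : Set B}

theorem biprod_mem_left (hcp : CotorsionPair E C K) {A A' : B} (hA : A ∈ C) (hA' : A' ∈ C) :
    (A ⊞ A') ∈ C := by
  obtain ⟨V, P, i, d, hP, hV, h⟩ := hcp.resolve (A ⊞ A')
  obtain ⟨r, hr⟩ := ((hcp.ext hA hV).biprod_left (hcp.ext hA' hV)).exists_retraction h
  obtain ⟨e, -, -⟩ := exists_iso_biprod_of_retraction h hr
  exact hcp.summandClosed_left _ P hP ⟨V, ⟨e ≪≫ biprod.braiding _ _⟩⟩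

theorem biprod_mem_right (hcp : CotorsionPair E C K) {A A' : B} (hA : A ∈ K) (hA' : A' ∈ K) :
    (A ⊞ A') ∈ K := by
  obtain ⟨V, P, i, d, hP, hV, h⟩ := hcp.coresolve (A ⊞ A')
  obtain ⟨r, hr⟩ := ((hcp.ext hP hA).biprod_right (hcp.ext hP hA')).exists_retraction h
  obtain ⟨e, -, -⟩ := exists_iso_biprod_of_retraction h hr
  exact hcp.summandClosed_right _ V hV ⟨P, ⟨e⟩⟩

theorem mem_left_of_isSES (hcp : CotorsionPair E C K)
    (hrigid : ∀ x ∈ C, ∀ y ∈ C, E.Ext1Zero x y) {X W U : B} (hX : X ∈ E.CoCone C C)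
    {f : X ⟶ W} {g : W ⟶ U} (hf : E.isSES f g) (hW : W ∈ K) (hU : U ∈ C) : W ∈ C := by
  obtain ⟨C₁, C₂, j, q, hC₁, hC₂, hj⟩ := hX
  obtain ⟨φ, hφ⟩ := (hcp.ext hC₂ hW).exists_comp_eq hj f
  obtain ⟨ψ, hψ⟩ := (hrigid U hU C₁ hC₁).exists_comp_eq hf j
  obtain ⟨e⟩ := nonempty_biprod_iso_of_comp_eq hj hf hφ hψ
  exact hcp.summandClosed_left W _ (hcp.biprod_mem_left hU hC₁)
    ⟨C₂, ⟨e.symm ≪≫ biprod.braiding _ _⟩⟩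

end CotorsionPair

theorem stmt4_general (E : ExactStr B) (C K : Set B) (hcp : CotorsionPair E C K)
    (hrigid : ∀ x ∈ C, ∀ y ∈ C, E.Ext1Zero x y) :
    SummandClosed (E.CoCone C C) := by
  rintro A X hX ⟨Y, ⟨e⟩⟩
  obtain ⟨V, U, a, b, hU, hV, hab⟩ := hcp.coresolve A
  obtain ⟨V', U', a', b', hU', hV', hab'⟩ := hcp.coresolve Y
  have hVV' : (V ⊞ V') ∈ C :=
    hcp.mem_left_of_isSES hrigid (mem_coCone_of_iso e hX) (isSES_biprodMap hab hab')
      (hcp.biprod_mem_right hV hV') (hcp.biprod_mem_left hU hU')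
  exact ⟨V, U, a, b, hcp.summandClosed_left V _ hVV' ⟨V', ⟨Iso.refl _⟩⟩, hU, hab⟩

/-- Lemma 2.6: for a cotorsion pair `(C, K)` with `C` rigid, `H = CoCone(C, C)` is
closed under direct summands. -/
theorem stmt4 (k : Type*) [Field k] [Linear k B]
    (E : ExactStr B) (hKS : IsKrullSchmidt (B := B)) (hEP : E.EnoughProj) (hEI : E.EnoughInj)
    (C K : Set B) (hcp : CotorsionPair E C K)
    (hrigid : ∀ x ∈ C, ∀ y ∈ C, E.Ext1Zero x y) :
    SummandClosed (E.CoCone C C) :=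
  stmt4_general E C K hcp hrigid
end

section
/- Let (C, K) be a fully rigid cotorsion pair in an exact category B, and suppose K admits a cotorsion pair (K, D). Then the subcategory (ΣD)/I is the class of enough injectives in the abelian quotient category B/K: every object of ΣD is injective in B/K, and every object of B/K embeds into an object of (ΣD)/I. -/
open CategoryTheory Limits ZeroObject

universe v u

variable (B : Type u)

variable {B} [Category.{v} B] [Preadditive B] [HasZeroObject B]
  [HasFiniteBiproducts B] [HasBinaryBiproducts B]

/-!
Write `Q : B ⥤ B/K`. A morphism is killed by `Q` iff it factors through `K`; since injectives lie
in `K` and `Ext¹(K, D) = 0`, a morphism into `Z ∈ ΣD`, presented as `D' ↣ I ↠ Z`, factors through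
`K` iff it factors through `I ↠ Z`.

Every `X` embeds into an object of `ΣD`: resolve `D₁ ↣ K₁ ↠ X` by the pair `(K, D)`, embed `K₁`
into an injective `I₁` and take the cokernel `Y` of `D₁ ↣ I₁`; the induced `X ⟶ Y` is monic in
`B` and stays monic in `B/K`. Hence, in the abelian category `B/K`, an object `Z ∈ ΣD` is injective
as soon as every `m : Z ⟶ Y` with `Y ∈ ΣD` and `Q m` monic has a retraction modulo `K`. Lifting
`m` to the presentations gives a morphism of conflations `(ν, μ, m)`; pushing out along `ν` and
using that `m` is monic modulo `K` produces `φ` with `ν ≫ φ ≡ 𝟙` modulo `D' ↣ I`, and extending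
`φ` (into the injective `I`) to a morphism of conflations back yields `r` with `m ≫ r ≡ 𝟙`
modulo `I ↠ Z`.
-/

lemma injective_of_forall_mono_exists_retraction {𝒜 : Type*} [Category 𝒜] [Abelian 𝒜] {J : 𝒜}
    (h : ∀ ⦃P : 𝒜⦄ (j : J ⟶ P), Mono j → ∃ r : P ⟶ J, j ≫ r = 𝟙 J) : Injective J where
  factors f g _ := by
    obtain ⟨r, hr⟩ := h (pushout.inl f g) inferInstance
    exact ⟨pushout.inr f g ≫ r, by rw [← pushout.condition_assoc, hr, Category.comp_id]⟩

section

variable {B : Type*} [Category B] [Preadditive B]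

lemma congruence_quotRel [HasBinaryBiproducts B] {S : Set B} (hne : S.Nonempty)
    (hS : ∀ ⦃X₁ X₂ : B⦄, X₁ ∈ S → X₂ ∈ S → (X₁ ⊞ X₂) ∈ S) : Congruence (quotRel S) where
  equivalence := {
    refl := fun _ => ⟨hne.some, hne.some_mem, 0, 0, by simp⟩
    symm := fun ⟨W, hW, a, b, hab⟩ => ⟨W, hW, a, -b, by simp [← hab]⟩
    trans := fun ⟨W₁, hW₁, a₁, b₁, h₁⟩ ⟨W₂, hW₂, a₂, b₂, h₂⟩ =>
      ⟨_, hS hW₁ hW₂, biprod.lift a₁ a₂, biprod.desc b₁ b₂, by simp [← h₁, ← h₂]⟩ }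
  comp_left := fun f _ _ ⟨W, hW, a, b, hab⟩ =>
    ⟨W, hW, f ≫ a, b, by rw [← Preadditive.comp_sub, hab, Category.assoc]⟩
  comp_right := fun g ⟨W, hW, a, b, hab⟩ =>
    ⟨W, hW, a, b ≫ g, by rw [← Preadditive.sub_comp, hab, Category.assoc]⟩

lemma mono_map_quotient_functor_iff {S : Set B} [Congruence (quotRel S)] {X Y : B} (m : X ⟶ Y) :
    Mono ((Quotient.functor (quotRel S)).map m) ↔
      ∀ ⦃T : B⦄ (t : T ⟶ X), FactorsThru S (t ≫ m) → FactorsThru S t := by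
  constructor
  · intro _ T t ht
    have h : (Quotient.functor (quotRel S)).map (t ≫ m) =
        (Quotient.functor (quotRel S)).map ((0 : T ⟶ X) ≫ m) :=
      (Quotient.functor_map_eq_iff _ _ _).2 (by simpa [quotRel] using ht)
    simp only [Functor.map_comp, cancel_mono] at h
    simpa [quotRel] using (Quotient.functor_map_eq_iff _ _ _).1 h
  · refine fun hm => ⟨fun {T} u v huv => ?_⟩
    obtain ⟨u, rfl⟩ := (Quotient.functor (quotRel S)).map_surjective u
    obtain ⟨v, rfl⟩ := (Quotient.functor (quotRel S)).map_surjective v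
    rw [← Functor.map_comp, ← Functor.map_comp, Quotient.functor_map_eq_iff] at huv
    rw [Quotient.functor_map_eq_iff]
    simpa [quotRel] using hm (u - v) (by simpa [quotRel] using huv)

end

section

variable {B : Type*} [Category B] [Preadditive B] [HasZeroObject B] [HasBinaryBiproducts B]

namespace ExactStr

variable {E : ExactStr B}

lemma mono_of_isSES_s6 {X Y Z : B} {i : X ⟶ Y} {d : Y ⟶ Z} (h : E.isSES i d) : Mono i where
  right_cancellation x y hxy := by
    obtain ⟨_, -, hu⟩ := E.is_kernel h (x ≫ i) (by rw [Category.assoc, E.comp_eq_zero h, comp_zero])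
    exact (hu x rfl).trans (hu y hxy.symm).symm

lemma epi_of_isSES_s6 {X Y Z : B} {i : X ⟶ Y} {d : Y ⟶ Z} (h : E.isSES i d) : Epi d where
  left_cancellation x y hxy := by
    obtain ⟨_, -, hu⟩ := E.is_cokernel h (d ≫ x)
      (by rw [← Category.assoc, E.comp_eq_zero h, zero_comp])
    exact (hu x rfl).trans (hu y hxy.symm).symm

lemma exists_section_of_retraction {X Y Z : B} {i : X ⟶ Y} {d : Y ⟶ Z} (h : E.isSES i d)
    {r : Y ⟶ X} (hr : i ≫ r = 𝟙 X) : ∃ s : Z ⟶ Y, s ≫ d = 𝟙 Z := by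
  have := epi_of_isSES_s6 h
  obtain ⟨s, hs, -⟩ := E.is_cokernel h (𝟙 Y - r ≫ i) (by simp [reassoc_of% hr])
  exact ⟨s, (cancel_epi d).1 (by simp [reassoc_of% hs, E.comp_eq_zero h])⟩

lemma exists_retraction_of_section {X Y Z : B} {i : X ⟶ Y} {d : Y ⟶ Z} (h : E.isSES i d)
    {s : Z ⟶ Y} (hs : s ≫ d = 𝟙 Z) : ∃ r : Y ⟶ X, i ≫ r = 𝟙 X ∧ r ≫ i = 𝟙 Y - d ≫ s := by
  have := mono_of_isSES_s6 h
  obtain ⟨r, hr, -⟩ := E.is_kernel h (𝟙 Y - d ≫ s) (by simp [hs])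
  exact ⟨r, (cancel_mono i).1 (by simp [hr, reassoc_of% (E.comp_eq_zero h)]), hr⟩

lemma isSummand_of_section {X Y Z : B} {i : X ⟶ Y} {d : Y ⟶ Z} (h : E.isSES i d)
    {s : Z ⟶ Y} (hs : s ≫ d = 𝟙 Z) : IsSummand X Y := by
  have := mono_of_isSES_s6 h
  obtain ⟨r, hir, hri⟩ := exists_retraction_of_section h hs
  have hsr : s ≫ r = 0 := (cancel_mono i).1 (by simp [hri, reassoc_of% hs])
  refine ⟨Z, ⟨⟨biprod.lift r d, biprod.desc i s, by simp [hri], ?_⟩⟩⟩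
  ext <;> simp [hir, hsr, hs, E.comp_eq_zero h]

lemma exists_lift_of_ext1Zero {A M Z : B} {i : A ⟶ M} {d : M ⟶ Z} (h : E.isSES i d)
    {X : B} (f : X ⟶ Z) (hX : E.Ext1Zero X A) : ∃ g : X ⟶ M, g ≫ d = f := by
  obtain ⟨V, i', d', g, h', hg, -⟩ := E.pullback_defl h f
  obtain ⟨s, hs⟩ := hX i' d' h'
  exact ⟨s ≫ g, by rw [Category.assoc, hg, reassoc_of% hs]⟩

lemma exists_lift_of_factorsThru {S : Set B} {A M Z : B} {i : A ⟶ M} {d : M ⟶ Z}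
    (h : E.isSES i d) (hS : ∀ W ∈ S, E.Ext1Zero W A) {X : B} {f : X ⟶ Z}
    (hf : FactorsThru S f) : ∃ g : X ⟶ M, g ≫ d = f := by
  obtain ⟨W, hW, a, b, rfl⟩ := hf
  obtain ⟨g, hg⟩ := exists_lift_of_ext1Zero h b (hS W hW)
  exact ⟨a ≫ g, by rw [Category.assoc, hg]⟩

lemma ext1Zero_biprod {U X₁ X₂ : B} (h₁ : E.Ext1Zero U X₁) (h₂ : E.Ext1Zero U X₂) :
    E.Ext1Zero U (X₁ ⊞ X₂) := by
  intro M i d h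
  obtain ⟨M₁, i₁, d₁, g₁, h₁', hg₁, -⟩ := E.pushout_infl h (biprod.fst : X₁ ⊞ X₂ ⟶ X₁)
  obtain ⟨M₂, i₂, d₂, g₂, h₂', hg₂, -⟩ := E.pushout_infl h (biprod.snd : X₁ ⊞ X₂ ⟶ X₂)
  obtain ⟨s₁, hs₁⟩ := h₁ i₁ d₁ h₁'
  obtain ⟨s₂, hs₂⟩ := h₂ i₂ d₂ h₂'
  obtain ⟨r₁, hr₁, -⟩ := exists_retraction_of_section h₁' hs₁
  obtain ⟨r₂, hr₂, -⟩ := exists_retraction_of_section h₂' hs₂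
  exact exists_section_of_retraction h (r := biprod.lift (g₁ ≫ r₁) (g₂ ≫ r₂))
    (by ext <;> simp [reassoc_of% hg₁, reassoc_of% hg₂, hr₁, hr₂])

lemma isPushout_of_isSES {X Y Z X' Y' : B} {i : X ⟶ Y} {d : Y ⟶ Z} (h : E.isSES i d)
    {i' : X' ⟶ Y'} {d' : Y' ⟶ Z} (h' : E.isSES i' d') {f : X ⟶ X'} {g : Y ⟶ Y'}
    (hfg : i ≫ g = f ≫ i') (hd : g ≫ d' = d) : IsPushout i f g i' := by
  have := epi_of_isSES_s6 h
  have := mono_of_isSES_s6 h'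
  have hext : ∀ {T : B} {x y : Y' ⟶ T}, g ≫ x = g ≫ y → i' ≫ x = i' ≫ y → x = y := by
    intro T x y hg hi
    obtain ⟨c, hc, -⟩ := E.is_cokernel h' (x - y) (by rw [Preadditive.comp_sub, hi, sub_self])
    have hc0 : c = 0 := (cancel_epi d).1 (by
      rw [← hd, Category.assoc, hc, Preadditive.comp_sub, hg, sub_self, comp_zero])
    rw [← sub_eq_zero, ← hc, hc0, comp_zero]
  have hdesc : ∀ (T : B) (α : Y ⟶ T) (β : X' ⟶ T), i ≫ α = f ≫ β →
      ∃ ω : Y' ⟶ T, g ≫ ω = α ∧ i' ≫ ω = β := by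
    intro T α β hαβ
    obtain ⟨V, j, d'', k, hV, hk, hkd⟩ := E.pushout_infl h' β
    have := mono_of_isSES_s6 hV
    obtain ⟨c, hc, -⟩ := E.is_cokernel h (g ≫ k - α ≫ j)
      (by simp [reassoc_of% hfg, hk, reassoc_of% hαβ])
    have hcd : c ≫ d'' = 𝟙 Z :=
      (cancel_epi d).1 (by simp [reassoc_of% hc, hkd, hd, E.comp_eq_zero hV])
    obtain ⟨ρ, hjρ, hρj⟩ := exists_retraction_of_section hV hcd
    have hcρ : c ≫ ρ = 0 := (cancel_mono j).1 (by simp [hρj, reassoc_of% hcd])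
    refine ⟨k ≫ ρ, ?_, by rw [reassoc_of% hk, hjρ, Category.comp_id]⟩
    rw [← Category.assoc, ← sub_add_cancel (g ≫ k) (α ≫ j), ← hc]
    simp [hcρ, hjρ]
  choose desc hdesc₁ hdesc₂ using hdesc
  exact .of_isColimit' ⟨hfg⟩ (PushoutCocone.IsColimit.mk hfg
    (fun c => desc _ c.inl c.inr c.condition) (fun c => hdesc₁ _ _ _ _)
    (fun c => hdesc₂ _ _ _ _) (fun c ω hg hi => hext (by rw [hg, hdesc₁]) (by rw [hi, hdesc₂])))

lemma mono_of_isSES_of_comp {A M N X Y : B} {i : A ⟶ M} {d : M ⟶ X} (hX : E.isSES i d)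
    {κ : M ⟶ N} [Mono κ] {q : N ⟶ Y} (hY : E.isSES (i ≫ κ) q) {m : X ⟶ Y}
    (hm : d ≫ m = κ ≫ q) : Mono m := by
  refine Preadditive.mono_of_cancel_zero _ fun {T} y hy => ?_
  obtain ⟨V, _, e, g, hV, hg, -⟩ := E.pullback_defl hX y
  have := epi_of_isSES_s6 hV
  obtain ⟨z, hz, -⟩ := E.is_kernel hY (g ≫ κ)
    (by rw [Category.assoc, ← hm, reassoc_of% hg, hy, comp_zero])
  have hzi : z ≫ i = g := (cancel_mono κ).1 (by rw [Category.assoc, hz])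
  exact (cancel_epi e).1 (by
    rw [comp_zero, ← hg, ← hzi, Category.assoc, E.comp_eq_zero hX, comp_zero])

lemma exists_map_of_isSES_of_inj {X Y Z X' Y' Z' : B} {i : X ⟶ Y} {d : Y ⟶ Z}
    (h : E.isSES i d) {i' : X' ⟶ Y'} {d' : Y' ⟶ Z'} (h' : E.isSES i' d') (hY' : E.Inj Y')
    (f : X ⟶ X') : ∃ (g : Y ⟶ Y') (k : Z ⟶ Z'), i ≫ g = f ≫ i' ∧ d ≫ k = g ≫ d' := by
  obtain ⟨g, hg⟩ := hY' i d h (f ≫ i')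
  obtain ⟨k, hk, -⟩ := E.is_cokernel h (g ≫ d')
    (by rw [reassoc_of% hg, E.comp_eq_zero h', comp_zero])
  exact ⟨g, k, hg, hk⟩

lemma exists_sub_id_eq_comp_iff {X Y Z : B} {i : X ⟶ Y} {d : Y ⟶ Z} (h : E.isSES i d)
    {α : X ⟶ X} {γ : Y ⟶ Y} {ε : Z ⟶ Z} (hα : i ≫ γ = α ≫ i) (hε : d ≫ ε = γ ≫ d) :
    (∃ σ : Y ⟶ X, α - 𝟙 X = i ≫ σ) ↔ ∃ β : Z ⟶ Y, ε - 𝟙 Z = β ≫ d := by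
  have := mono_of_isSES_s6 h
  have := epi_of_isSES_s6 h
  constructor
  · rintro ⟨σ, hσ⟩
    rw [sub_eq_iff_eq_add'] at hσ
    obtain ⟨β, hβ, -⟩ := E.is_cokernel h (γ - 𝟙 Y - σ ≫ i)
      (by simp [hα, hσ])
    refine ⟨β, (cancel_epi d).1 ?_⟩
    rw [Preadditive.comp_sub, hε, Category.comp_id, ← Category.assoc, hβ]
    simp [E.comp_eq_zero h]
  · rintro ⟨β, hβ⟩
    rw [sub_eq_iff_eq_add'] at hβ
    obtain ⟨σ, hσ, -⟩ := E.is_kernel h (γ - 𝟙 Y - d ≫ β)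
      (by simp [← hε, hβ])
    refine ⟨σ, (cancel_mono i).1 ?_⟩
    rw [Preadditive.sub_comp, ← hα, Category.id_comp, Category.assoc, hσ]
    simp [reassoc_of% (E.comp_eq_zero h)]

end ExactStr

namespace CotorsionPair

variable {E : ExactStr B} {U V : Set B}

lemma injObjs_subset_right (hUV : CotorsionPair E U V) : E.injObjs ⊆ V := by
  intro I hI
  obtain ⟨W, _, i, d, -, hW, h⟩ := hUV.coresolve I
  obtain ⟨r, hr⟩ := hI i d h (𝟙 I)
  obtain ⟨s, hs⟩ := ExactStr.exists_section_of_retraction h hr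
  exact hUV.summandClosed_right I W hW (ExactStr.isSummand_of_section h hs)

lemma biprod_mem_right_s6 (hUV : CotorsionPair E U V) {X₁ X₂ : B} (h₁ : X₁ ∈ V) (h₂ : X₂ ∈ V) :
    (X₁ ⊞ X₂) ∈ V := by
  obtain ⟨W, _, i, d, hU, hW, h⟩ := hUV.coresolve (X₁ ⊞ X₂)
  obtain ⟨s, hs⟩ := ExactStr.ext1Zero_biprod (hUV.ext hU h₁) (hUV.ext hU h₂) i d h
  exact hUV.summandClosed_right _ W hW (ExactStr.isSummand_of_section h hs)

end CotorsionPair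

lemma CotorsionPair.congruence_quotRel {E : ExactStr B} {U V : Set B}
    (hUV : CotorsionPair E U V) : Congruence (quotRel V) :=
  _root_.congruence_quotRel (by obtain ⟨W, -, -, -, -, hW, -⟩ := hUV.coresolve 0; exact ⟨W, hW⟩)
    fun _ _ => hUV.biprod_mem_right_s6

section

variable {E : ExactStr B} {K D : Set B} [Congruence (quotRel K)]

lemma exists_retraction_of_mono_map (hInj : E.injObjs ⊆ K) (hKD : CotorsionPair E K D)
    {Z Y : B} (hZ : Z ∈ E.SigmaSet D) (hY : Y ∈ E.SigmaSet D) (m : Z ⟶ Y)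
    [hm : Mono ((Quotient.functor (quotRel K)).map m)] :
    ∃ r : Y ⟶ Z, (Quotient.functor (quotRel K)).map m ≫ (Quotient.functor (quotRel K)).map r =
      𝟙 _ := by
  obtain ⟨D', I, e, p, hD', hI, hZ⟩ := hZ
  obtain ⟨D'', I'', e'', p'', hD'', hI'', hY⟩ := hY
  obtain ⟨μ, hμ⟩ := ExactStr.exists_lift_of_ext1Zero hY (p ≫ m) (hKD.ext (hInj hI) hD'')
  obtain ⟨ν, hν, -⟩ := E.is_kernel hY (e ≫ μ)
    (by rw [Category.assoc, hμ, reassoc_of% (E.comp_eq_zero hZ), zero_comp])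
  obtain ⟨M, eν, pν, ι, hM, hι, hpν⟩ := E.pushout_infl hZ ν
  have hP := ExactStr.isPushout_of_isSES hZ hM hι hpν
  -- `pν ≫ m` factors through `I'' ∈ K`, hence so does `pν`, which therefore lifts along `p`.
  have hpνm : pν ≫ m = hP.desc μ e'' hν.symm ≫ p'' := hP.hom_ext
    (by rw [reassoc_of% hpν, hP.inl_desc_assoc, hμ])
    (by rw [reassoc_of% (E.comp_eq_zero hM), hP.inr_desc_assoc, E.comp_eq_zero hY, zero_comp])
  obtain ⟨ρ, hρ⟩ := ExactStr.exists_lift_of_factorsThru hZ (fun W hW => hKD.ext hW hD')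
    ((mono_map_quotient_functor_iff m).1 hm pν ⟨I'', hInj hI'', _, p'', hpνm⟩)
  obtain ⟨φ, hφ, -⟩ := E.is_kernel hZ (eν ≫ ρ) (by rw [Category.assoc, hρ, E.comp_eq_zero hM])
  obtain ⟨σ, hσ⟩ := (ExactStr.exists_sub_id_eq_comp_iff hZ (α := ν ≫ φ) (γ := ι ≫ ρ) (ε := 𝟙 Z)
    (by rw [reassoc_of% hι, ← hφ, Category.assoc])
    (by rw [Category.assoc, hρ, hpν, Category.comp_id])).2 ⟨0, by simp⟩
  obtain ⟨ψ, r, hψ, hr⟩ := ExactStr.exists_map_of_isSES_of_inj hY hZ hI φ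
  obtain ⟨β, hβ⟩ := (ExactStr.exists_sub_id_eq_comp_iff hZ (α := ν ≫ φ) (γ := μ ≫ ψ) (ε := m ≫ r)
    (by rw [← reassoc_of% hν, hψ, Category.assoc])
    (by rw [← reassoc_of% hμ, hr, Category.assoc])).1 ⟨σ, hσ⟩
  refine ⟨r, ?_⟩
  rw [← Functor.map_comp, ← CategoryTheory.Functor.map_id, Quotient.functor_map_eq_iff]
  exact ⟨I, hInj hI, β, p, hβ⟩

lemma exists_mono_map_to_sigmaSet (hKD : CotorsionPair E K D) (hEI : E.EnoughInj) (X : B) :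
    ∃ Y ∈ E.SigmaSet D, ∃ m : X ⟶ Y, Mono ((Quotient.functor (quotRel K)).map m) := by
  obtain ⟨D₁, K₁, i, d, hK₁, hD₁, hX⟩ := hKD.resolve X
  obtain ⟨I, W, κ, π, hI, hW⟩ := hEI K₁
  obtain ⟨Y, q, hY⟩ := E.infl_comp i κ ⟨X, d, hX⟩ ⟨W, π, hW⟩
  have := ExactStr.epi_of_isSES_s6 hX
  have := ExactStr.mono_of_isSES_s6 hW
  obtain ⟨m, hm, -⟩ := E.is_cokernel hX (κ ≫ q) (by rw [← Category.assoc, E.comp_eq_zero hY])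
  obtain ⟨s, hs, -⟩ := E.is_cokernel hY π (by rw [Category.assoc, E.comp_eq_zero hW, comp_zero])
  have hms : m ≫ s = 0 :=
    (cancel_epi d).1 (by rw [reassoc_of% hm, hs, E.comp_eq_zero hW, comp_zero])
  have := ExactStr.mono_of_isSES_of_comp hX hY hm
  refine ⟨Y, ⟨D₁, I, i ≫ κ, q, hD₁, hI, hY⟩, m,
    (mono_map_quotient_functor_iff m).2 fun T t ⟨K₀, hK₀, a, b, hab⟩ => ?_⟩
  obtain ⟨v, hv⟩ := ExactStr.exists_lift_of_ext1Zero hY b (hKD.ext hK₀ hD₁)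
  obtain ⟨c, hc, -⟩ := E.is_kernel hW (a ≫ v)
    (by rw [← hs, Category.assoc, reassoc_of% hv, ← reassoc_of% hab, hms, comp_zero])
  exact ⟨K₁, hK₁, c, d, (cancel_mono m).1 (by rw [Category.assoc, hm, reassoc_of% hc, hv, hab])⟩

end

end

theorem stmt6_general (E : ExactStr B) (hEI : E.EnoughInj)
    (C K D : Set B) (hFR : FullyRigid E C K) (hKD : CotorsionPair E K D)
    [Abelian (QuotCat K)] :
    (∀ X ∈ E.SigmaSet D, Injective ((Quotient.functor (quotRel K)).obj X)) ∧
    (∀ X : B, ∃ Y ∈ E.SigmaSet D,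
      ∃ m : (Quotient.functor (quotRel K)).obj X ⟶ (Quotient.functor (quotRel K)).obj Y,
        Mono m) := by
  have := hFR.cp.congruence_quotRel
  refine ⟨fun Z hZ => injective_of_forall_mono_exists_retraction fun P j _ => ?_,
    fun X => (exists_mono_map_to_sigmaSet hKD hEI X).imp fun Y ⟨hY, m, hm⟩ => ⟨hY, _, hm⟩⟩
  obtain ⟨Y, hY, m, _⟩ := exists_mono_map_to_sigmaSet hKD hEI P.as
  obtain ⟨χ, hχ⟩ :=
    (Quotient.functor (quotRel K)).map_surjective (j ≫ (Quotient.functor (quotRel K)).map m)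
  have : Mono ((Quotient.functor (quotRel K)).map χ) := hχ ▸ mono_comp _ _
  obtain ⟨r, hr⟩ := exists_retraction_of_mono_map hFR.cp.injObjs_subset_right hKD hZ hY χ
  exact ⟨_, by rw [← Category.assoc, ← hχ, hr]⟩

/-- Proposition 3.1: `(ΣD)/I` is the class of enough injectives of the abelian
quotient `B/K`. -/
theorem stmt6 (k : Type*) [Field k] [Linear k B]
    (E : ExactStr B) (hKS : IsKrullSchmidt (B := B)) (hEP : E.EnoughProj) (hEI : E.EnoughInj)
    (C K D : Set B) (hFR : FullyRigid E C K) (hKD : CotorsionPair E K D)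
    [Abelian (QuotCat K)] :
    (∀ X ∈ E.SigmaSet D, Injective ((Quotient.functor (quotRel K)).obj X)) ∧
    (∀ X : B, ∃ Y ∈ E.SigmaSet D,
      ∃ m : (Quotient.functor (quotRel K)).obj X ⟶ (Quotient.functor (quotRel K)).obj Y,
        Mono m) :=
  stmt6_general E hEI C K D hFR hKD
end

section
/- Let (C, K) be a fully rigid cotorsion pair in an exact category B, and let X ∈ H_K with projective dimension 1 in B. Then X has projective dimension at most 1 in the abelian quotient B/K. -/
open CategoryTheory Limits ZeroObject

universe v u

variable (B : Type u)

variable {B} [Category.{v} B] [Preadditive B] [HasZeroObject B]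
  [HasFiniteBiproducts B] [HasBinaryBiproducts B]

/-
Write `X ↣ C₀ ↠ C₁` with `Cᵢ ∈ C` and choose projective presentations `Wᵢ ↣ Qᵢ ↠ Cᵢ`. Lifting
`y` and `p₁` along them gives `W₀ ⟶ W₁ ⟶ X`, which becomes a projective presentation of `X` in
`B/K`. Rigidity puts `C`, hence every projective, in `K`, and since `Ext¹(C, K) = 0` a morphism in
the ideal of `K` extends along each inflation `Wᵢ ↣ Qᵢ`; diagram chases then show that
`W₀ ⟶ W₁ ⟶ X` is short exact modulo `K`. Injectivity of `W₀ ⟶ W₁` is where `pd X = 1` enters: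
the syzygy of `X` is projective, so every morphism from an object of `C` to `X` factors through a
projective. The `Wᵢ` are projective in `B/K` because, modulo `K`, any `e : A ⟶ Z` is the second
component of the inflation `(κ, e) : A ↣ V ⊞ Z`, where `κ : A ↣ V` is an inflation with `V ∈ K`.
-/

section

omit [HasFiniteBiproducts B]

local notation "π" K:max => Quotient.functor (quotRel K)

namespace ExactStr

variable {E : ExactStr B}

namespace isSES

variable {A M T : B} {i : A ⟶ M} {d : M ⟶ T}

lemma comp_eq_zero (h : E.isSES i d) : i ≫ d = 0 := E.comp_eq_zero h

lemma cancel_mono (h : E.isSES i d) {W : B} {u v : W ⟶ A} (huv : u ≫ i = v ≫ i) : u = v := by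
  obtain ⟨g, -, hg⟩ := E.is_kernel h (u ≫ i) (by rw [Category.assoc, h.comp_eq_zero, comp_zero])
  exact (hg u rfl).trans (hg v huv.symm).symm

lemma cancel_epi (h : E.isSES i d) {W : B} {u v : T ⟶ W} (huv : d ≫ u = d ≫ v) : u = v := by
  obtain ⟨g, -, hg⟩ :=
    E.is_cokernel h (d ≫ u) (by rw [← Category.assoc, h.comp_eq_zero, zero_comp])
  exact (hg u rfl).trans (hg v huv.symm).symm

lemma exists_lift (h : E.isSES i d) {W : B} (f : W ⟶ M) (hf : f ≫ d = 0) :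
    ∃ g : W ⟶ A, g ≫ i = f :=
  (E.is_kernel h f hf).exists

lemma exists_desc (h : E.isSES i d) {W : B} (f : M ⟶ W) (hf : i ≫ f = 0) :
    ∃ g : T ⟶ W, d ≫ g = f :=
  (E.is_cokernel h f hf).exists

lemma nonempty_splitting_of_retraction (h : E.isSES i d) {r : M ⟶ A} (hr : i ≫ r = 𝟙 A) :
    Nonempty (ShortComplex.mk i d h.comp_eq_zero).Splitting := by
  obtain ⟨s, hs⟩ := h.exists_desc (𝟙 M - r ≫ i) (by
    rw [Preadditive.comp_sub, reassoc_of% hr, Category.comp_id, sub_self])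
  refine ⟨⟨r, s, hr, h.cancel_epi ?_, by simp [hs]⟩⟩
  rw [reassoc_of% hs, Preadditive.sub_comp, Category.assoc, h.comp_eq_zero]
  simp

lemma exists_retraction_of_section (h : E.isSES i d) {s : T ⟶ M} (hs : s ≫ d = 𝟙 T) :
    ∃ r : M ⟶ A, i ≫ r = 𝟙 A := by
  obtain ⟨r, hr⟩ := h.exists_lift (𝟙 M - d ≫ s) (by simp [hs])
  refine ⟨r, h.cancel_mono ?_⟩
  rw [Category.assoc, hr, Preadditive.comp_sub, reassoc_of% h.comp_eq_zero]
  simp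

lemma nonempty_splitting_of_section (h : E.isSES i d) {s : T ⟶ M} (hs : s ≫ d = 𝟙 T) :
    Nonempty (ShortComplex.mk i d h.comp_eq_zero).Splitting :=
  have ⟨_, hr⟩ := h.exists_retraction_of_section hs
  h.nonempty_splitting_of_retraction hr

lemma exists_extension_of_pushout_split (h : E.isSES i d) {Z : B} (f : A ⟶ Z)
    (hsplit : ∀ ⦃Y : B⦄ (i' : Z ⟶ Y) (d' : Y ⟶ T) (g : M ⟶ Y),
      E.isSES i' d' → i ≫ g = f ≫ i' → g ≫ d' = d → ∃ s : T ⟶ Y, s ≫ d' = 𝟙 T) :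
    ∃ F : M ⟶ Z, i ≫ F = f := by
  obtain ⟨Y, i', d', g, hY, hig, hgd⟩ := E.pushout_infl h f
  obtain ⟨r, hr⟩ := hY.exists_retraction_of_section (hsplit i' d' g hY hig hgd).choose_spec
  exact ⟨g ≫ r, by rw [← Category.assoc, hig, Category.assoc, hr, Category.comp_id]⟩

lemma exists_extension (h : E.isSES i d) {Z : B} (hT : E.Ext1Zero T Z) (f : A ⟶ Z) :
    ∃ F : M ⟶ Z, i ≫ F = f :=
  h.exists_extension_of_pushout_split f fun _ i' d' _ hY _ _ => hT i' d' hY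

lemma exists_lift_of_ext1Zero (h : E.isSES i d) {S : B} (hS : E.Ext1Zero S A) (f : S ⟶ T) :
    ∃ F : S ⟶ M, F ≫ d = f := by
  obtain ⟨Y, i', d', g, hY, hgd, -⟩ := E.pullback_defl h f
  obtain ⟨s, hs⟩ := hS i' d' hY
  exact ⟨s ≫ g, by rw [Category.assoc, hgd, ← Category.assoc, hs, Category.id_comp]⟩

end isSES

lemma factorsThru_proj_of_pdLE_one {X U : B} (hX : E.pdLE 1 X)
    (hU : ∀ ⦃P : B⦄, E.Proj P → E.Ext1Zero U P) (χ : U ⟶ X) : FactorsThru E.projObjs χ := by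
  obtain ⟨P₁, P₀, i, d, hP₀, h, hP₁⟩ := hX
  obtain ⟨a, ha⟩ := h.exists_lift_of_ext1Zero (hU hP₁) χ
  exact ⟨P₀, hP₀, a, d, ha.symm⟩

lemma isSES_biprod_inl_snd (A T : B) :
    E.isSES (biprod.inl : A ⟶ A ⊞ T) (biprod.snd : A ⊞ T ⟶ T) := by
  obtain ⟨Y, i, d, r, h, -, hr⟩ := E.pullback_defl (E.id_isSES A) (0 : T ⟶ 0)
  obtain ⟨sp⟩ := h.nonempty_splitting_of_retraction hr
  have hfr : i ≫ sp.r = 𝟙 A := sp.f_r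
  have hsg : sp.s ≫ d = 𝟙 T := sp.s_g
  have := E.iso_closed (Iso.refl A) sp.isoBinaryBiproduct.symm (Iso.refl T) h
  convert this using 1 <;> ext <;> simp [hfr, hsg, h.comp_eq_zero]

lemma isSES_of_splitting {S : ShortComplex B} (sp : S.Splitting) : E.isSES S.f S.g := by
  have := E.iso_closed (Iso.refl _) sp.isoBinaryBiproduct (Iso.refl _) (isSES_biprod_inl_snd _ _)
  convert this using 1 <;> simp

lemma isSES_biprod_inr_fst (A T : B) :
    E.isSES (biprod.inr : T ⟶ A ⊞ T) (biprod.fst : A ⊞ T ⟶ A) :=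
  isSES_of_splitting (S := ShortComplex.mk _ _ biprod.inr_fst) ⟨biprod.snd, biprod.inl, by simp,
    by simp, by simp [add_comm]⟩

lemma isSES_biprod_lift_id {A Z : B} (f : A ⟶ Z) :
    E.isSES (biprod.lift (𝟙 A) f) (biprod.snd - biprod.fst ≫ f) :=
  isSES_of_splitting (S := ShortComplex.mk (biprod.lift (𝟙 A) f) (biprod.snd - biprod.fst ≫ f)
    (by simp)) ⟨biprod.fst, biprod.inr, by simp,
    by simp, by ext <;> simp⟩

lemma isSES.of_isKernel {A A' M T : B} {i : A ⟶ M} {d : M ⟶ T} (h : E.isSES i d)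
    {j : A' ⟶ M} (hj : j ≫ d = 0)
    (hker : ∀ ⦃S : B⦄ (t : S ⟶ M), t ≫ d = 0 → ∃! s : S ⟶ A', s ≫ j = t) : E.isSES j d := by
  obtain ⟨β, hβ⟩ := h.exists_lift j hj
  obtain ⟨α, hα, -⟩ := hker i h.comp_eq_zero
  have hβα : β ≫ α = 𝟙 A' := by
    obtain ⟨_, -, huniq⟩ := hker j hj
    exact (huniq _ (show (β ≫ α) ≫ j = j by rw [Category.assoc, hα, hβ])).trans
      (huniq _ (Category.id_comp j)).symm
  have hαβ : α ≫ β = 𝟙 A := h.cancel_mono (by rw [Category.assoc, hβ, hα, Category.id_comp])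
  have := E.iso_closed ⟨β, α, hβα, hαβ⟩ (Iso.refl M) (Iso.refl T) h
  simpa [hβ] using this

lemma isSES_biprod_map_id {A V U : B} {κ : A ⟶ V} {μ : V ⟶ U} (h : E.isSES κ μ) (Z : B) :
    E.isSES (biprod.map κ (𝟙 Z)) (biprod.fst ≫ μ) := by
  obtain ⟨_, _, hcomp⟩ := E.defl_comp (biprod.fst : V ⊞ Z ⟶ V) μ
    ⟨Z, biprod.inr, isSES_biprod_inr_fst V Z⟩ ⟨A, κ, h⟩
  refine hcomp.of_isKernel (by simp [h.comp_eq_zero]) fun S t ht => ?_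
  rw [← Category.assoc] at ht
  obtain ⟨s, hs, huniq⟩ := E.is_kernel h (t ≫ biprod.fst) ht
  refine ⟨biprod.lift s (t ≫ biprod.snd), by ext <;> simp [hs], fun s' hs' => ?_⟩
  dsimp only at hs'
  ext
  · rw [biprod.lift_fst]; exact huniq _ (by rw [← hs']; simp)
  · simp [← hs']

lemma exists_isSES_biprod_lift {A V U Z : B} {κ : A ⟶ V} {μ : V ⟶ U} (h : E.isSES κ μ)
    (f : A ⟶ Z) : ∃ (N : B) (D : V ⊞ Z ⟶ N), E.isSES (biprod.lift κ f) D := by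
  obtain ⟨N, D, hD⟩ := E.infl_comp (biprod.lift (𝟙 A) f) (biprod.map κ (𝟙 Z))
    ⟨Z, _, isSES_biprod_lift_id f⟩ ⟨U, _, isSES_biprod_map_id h Z⟩
  have hlift : biprod.lift (𝟙 A) f ≫ biprod.map κ (𝟙 Z) = biprod.lift κ f := by ext <;> simp
  exact ⟨N, D, hlift ▸ hD⟩

end ExactStr

namespace CotorsionPair

variable {E : ExactStr B} {U V : Set B}

lemma mem_left_of_proj (cp : CotorsionPair E U V) {P : B} (hP : E.Proj P) : P ∈ U := by
  obtain ⟨_, UP, i, d, hU, -, h⟩ := cp.resolve P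
  obtain ⟨s, hs⟩ := hP i d h (𝟙 P)
  obtain ⟨sp⟩ := h.nonempty_splitting_of_section hs
  exact cp.summandClosed_left P UP hU ⟨_, ⟨sp.isoBinaryBiproduct ≪≫ biprod.braiding _ _⟩⟩

end CotorsionPair

namespace FullyRigid

variable {E : ExactStr B} {C K : Set B}

lemma subset (hFR : FullyRigid E C K) : C ⊆ K := fun Z hZ => by
  obtain ⟨VZ, UZ, i, d, hU, hV, h⟩ := hFR.cp.coresolve Z
  obtain ⟨s, hs⟩ := hFR.rigid hU hZ i d h
  obtain ⟨sp⟩ := h.nonempty_splitting_of_section hs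
  exact hFR.cp.summandClosed_right Z VZ hV ⟨_, ⟨sp.isoBinaryBiproduct⟩⟩

lemma proj_mem (hFR : FullyRigid E C K) {P : B} (hP : E.Proj P) : P ∈ K :=
  hFR.subset (hFR.cp.mem_left_of_proj hP)

end FullyRigid

section Ideal

omit [HasZeroObject B] [HasBinaryBiproducts B]

/-- The ideal generated by the identities of objects of `K`. Morphisms factoring through a
single object of `K` need not form an ideal, as `K` is not assumed closed under biproducts. -/
inductive InIdeal (K : Set B) {X Y : B} : (X ⟶ Y) → Prop
  | of {Z : B} (hZ : Z ∈ K) (g : X ⟶ Z) (h : Z ⟶ Y) : InIdeal K (g ≫ h)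
  | zero : InIdeal K 0
  | add {f g : X ⟶ Y} : InIdeal K f → InIdeal K g → InIdeal K (f + g)

namespace InIdeal

variable {K : Set B} {X Y : B}

lemma neg {f : X ⟶ Y} (hf : InIdeal K f) : InIdeal K (-f) := by
  induction hf with
  | of hZ g h => rw [← Preadditive.neg_comp]; exact of hZ _ _
  | zero => rw [neg_zero]; exact zero
  | add _ _ ihf ihg => rw [neg_add]; exact ihf.add ihg

lemma comp_left {W : B} (u : W ⟶ X) {f : X ⟶ Y} (hf : InIdeal K f) : InIdeal K (u ≫ f) := by
  induction hf with
  | of hZ g h => rw [← Category.assoc]; exact of hZ _ _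
  | zero => rw [comp_zero]; exact zero
  | add _ _ ihf ihg => rw [Preadditive.comp_add]; exact ihf.add ihg

end InIdeal

variable {K : Set B}

namespace QuotCat

lemma map_add_eq_of_inIdeal {X Y : B} {h : X ⟶ Y} (hh : InIdeal K h) (g : X ⟶ Y) :
    (π K).map (g + h) = (π K).map g := by
  induction hh generalizing g with
  | of hZ a b => exact CategoryTheory.Quotient.sound _ ⟨_, hZ, a, b, by abel⟩
  | zero => rw [add_zero]
  | add _ _ ih1 ih2 => rw [← add_assoc, ih2, ih1]

lemma map_eq_map_iff {X Y : B} {f g : X ⟶ Y} :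
    (π K).map f = (π K).map g ↔ InIdeal K (f - g) := by
  refine ⟨fun h => ?_, fun h => by simpa using map_add_eq_of_inIdeal h g⟩
  rw [← Functor.homRel_iff, Quotient.functor_homRel_eq_compClosure_eqvGen] at h
  induction h with
  | rel _ _ hrel =>
    obtain ⟨_, _, u, m₁, m₂, v, Z, hZ, a, b, hab⟩ := hrel
    have : u ≫ m₁ ≫ v - u ≫ m₂ ≫ v = (u ≫ a) ≫ b ≫ v := by
      rw [← Preadditive.comp_sub, ← Preadditive.sub_comp, hab]; simp
    rw [this]; exact .of hZ _ _
  | refl => rw [sub_self]; exact .zero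
  | symm _ _ _ ih => rw [← neg_sub]; exact ih.neg
  | trans _ _ _ _ _ ih1 ih2 => rw [← sub_add_sub_cancel]; exact ih1.add ih2

lemma mono_map {X Y : B} {f : X ⟶ Y}
    (hf : ∀ ⦃W : B⦄ (v : W ⟶ X), InIdeal K (v ≫ f) → InIdeal K v) : Mono ((π K).map f) := by
  refine ⟨fun {T} a b hab => ?_⟩
  rw [← (π K).map_preimage a, ← (π K).map_preimage b] at hab ⊢
  rw [← Functor.map_comp, ← Functor.map_comp, map_eq_map_iff, ← Preadditive.sub_comp] at hab
  exact map_eq_map_iff.2 (hf _ hab)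

lemma epi_map {X Y : B} {g : X ⟶ Y}
    (hg : ∀ ⦃W : B⦄ (u : Y ⟶ W), InIdeal K (g ≫ u) → InIdeal K u) : Epi ((π K).map g) := by
  refine ⟨fun {T} a b hab => ?_⟩
  rw [← (π K).map_preimage a, ← (π K).map_preimage b] at hab ⊢
  rw [← Functor.map_comp, ← Functor.map_comp, map_eq_map_iff, ← Preadditive.comp_sub] at hab
  exact map_eq_map_iff.2 (hg _ hab)

variable [Abelian (QuotCat K)]

lemma map_eq_zero_iff {X Y : B} {f : X ⟶ Y} : (π K).map f = 0 ↔ InIdeal K f := by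
  rw [← Functor.map_zero (π K) X Y, map_eq_map_iff, sub_zero]

lemma map_comp_map_eq_zero {X Y Z : B} {f : X ⟶ Y} {g : Y ⟶ Z} (h : InIdeal K (f ≫ g)) :
    (π K).map f ≫ (π K).map g = 0 := by
  rwa [← Functor.map_comp, map_eq_zero_iff]

lemma shortExact_map {X Y Z : B} {f : X ⟶ Y} {g : Y ⟶ Z} (hfg : InIdeal K (f ≫ g))
    (hf : ∀ ⦃W : B⦄ (v : W ⟶ X), InIdeal K (v ≫ f) → InIdeal K v)
    (hg : ∀ ⦃W : B⦄ (u : Z ⟶ W), InIdeal K (g ≫ u) → InIdeal K u)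
    (hcoker : ∀ ⦃W : B⦄ (t : Y ⟶ W), InIdeal K (f ≫ t) → ∃ u : Z ⟶ W, InIdeal K (g ≫ u - t)) :
    (ShortComplex.mk _ _ (map_comp_map_eq_zero hfg)).ShortExact := by
  have := mono_map hf
  have := epi_map hg
  refine .mk' (ShortComplex.exact_of_g_is_cokernel _
    (CokernelCofork.IsColimit.ofπ' _ _ fun {T} t ht => ?_)) ‹_› ‹_›
  have ht₀ : InIdeal K (f ≫ (π K).preimage t) := by
    rw [← map_eq_zero_iff, Functor.map_comp, Functor.map_preimage]; exact ht
  refine ⟨(π K).map (hcoker _ ht₀).choose, ?_⟩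
  rw [← Functor.map_comp, map_eq_map_iff.2 (hcoker _ ht₀).choose_spec, Functor.map_preimage]

end QuotCat

end Ideal

section

variable {E : ExactStr B} {K : Set B}

lemma InIdeal.exists_extension {A M T Z : B} {i : A ⟶ M} {d : M ⟶ T} {f : A ⟶ Z}
    (hf : InIdeal K f) (h : E.isSES i d) (hT : ∀ ⦃Y : B⦄, Y ∈ K → E.Ext1Zero T Y) :
    ∃ F : M ⟶ Z, i ≫ F = f := by
  induction hf with
  | of hY g g' =>
    obtain ⟨G, hG⟩ := h.exists_extension (hT hY) g
    exact ⟨G ≫ g', by rw [← Category.assoc, hG]⟩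
  | zero => exact ⟨0, comp_zero⟩
  | add _ _ ih₁ ih₂ =>
    obtain ⟨F₁, hF₁⟩ := ih₁
    obtain ⟨F₂, hF₂⟩ := ih₂
    exact ⟨F₁ + F₂, by rw [Preadditive.comp_add, hF₁, hF₂]⟩

/- `x, y` form a conflation `X ↣ C₀ ↠ C₁` and `ιᵢ, pᵢ` conflations `Wᵢ ↣ Qᵢ ↠ Cᵢ`; `m` lifts `y`
and induces `ω`, and `l` lifts `p₁` along `y` and induces `θ`. -/
variable {C : Set B} {X C₀ C₁ : B} {x : X ⟶ C₀} {y : C₀ ⟶ C₁}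
  {W₀ Q₀ : B} {ι₀ : W₀ ⟶ Q₀} {p₀ : Q₀ ⟶ C₀} {W₁ Q₁ : B} {ι₁ : W₁ ⟶ Q₁} {p₁ : Q₁ ⟶ C₁}
  {m : Q₀ ⟶ Q₁} {ω : W₀ ⟶ W₁} {l : Q₁ ⟶ C₀} {θ : W₁ ⟶ X}

lemma inIdeal_comp_syzygy (hxy : E.isSES x y) (h₀ : E.isSES ι₀ p₀) (hQ₀ : Q₀ ∈ K)
    (hm : m ≫ p₁ = p₀ ≫ y) (hω : ω ≫ ι₁ = ι₀ ≫ m) (hl : l ≫ y = p₁) (hθ : θ ≫ x = ι₁ ≫ l) :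
    InIdeal K (ω ≫ θ) := by
  obtain ⟨e, he⟩ := hxy.exists_lift (m ≫ l - p₀) (by
    rw [Preadditive.sub_comp, Category.assoc, hl, hm, sub_self])
  have : ω ≫ θ = ι₀ ≫ e := hxy.cancel_mono (by
    rw [Category.assoc, hθ, reassoc_of% hω, Category.assoc, he, Preadditive.comp_sub,
      h₀.comp_eq_zero, sub_zero])
  rw [this]
  exact .of hQ₀ _ _

lemma inIdeal_of_connecting_comp (hxy : E.isSES x y) (h₁ : E.isSES ι₁ p₁) (hC₀ : C₀ ∈ K)
    (hC₁ : ∀ ⦃Y : B⦄, Y ∈ K → E.Ext1Zero C₁ Y) (hl : l ≫ y = p₁) (hθ : θ ≫ x = ι₁ ≫ l)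
    {M : B} {u : X ⟶ M} (hu : InIdeal K (θ ≫ u)) : InIdeal K u := by
  obtain ⟨h, hh⟩ := hu.exists_extension h₁ hC₁
  obtain ⟨F, hF⟩ := hxy.exists_extension_of_pushout_split u fun Y i' d' g hY hg hgd => by
    obtain ⟨s, hs⟩ := h₁.exists_desc (l ≫ g - h ≫ i') (by
      rw [Preadditive.comp_sub, ← Category.assoc, ← hθ, Category.assoc, hg, reassoc_of% hh,
        sub_self])
    refine ⟨s, h₁.cancel_epi ?_⟩
    rw [reassoc_of% hs, Preadditive.sub_comp, Category.assoc, hgd, hl, Category.assoc,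
      hY.comp_eq_zero, comp_zero, sub_zero, Category.comp_id]
  rw [← hF]
  exact .of hC₀ _ _

lemma exists_lift_of_comp_eq (hxy : E.isSES x y) (h₀ : E.isSES ι₀ p₀) (hQ₁ : E.Proj Q₁)
    (hl : l ≫ y = p₁) {U : B} (hU : ∀ χ : U ⟶ X, FactorsThru E.projObjs χ) {ρ : U ⟶ C₀}
    {ψ : U ⟶ Q₁} (hρ : ρ ≫ y = ψ ≫ p₁) : ∃ s : U ⟶ Q₀, s ≫ p₀ = ρ := by
  obtain ⟨χ, hχ⟩ := hxy.exists_lift (ρ - ψ ≫ l) (by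
    rw [Preadditive.sub_comp, Category.assoc, hl, hρ, sub_self])
  obtain ⟨P, hP, a, b, rfl⟩ := hU χ
  obtain ⟨j, hj⟩ := hP _ _ h₀ (b ≫ x)
  obtain ⟨l', hl'⟩ := hQ₁ _ _ h₀ l
  refine ⟨ψ ≫ l' + a ≫ j, ?_⟩
  rw [Preadditive.add_comp, Category.assoc, Category.assoc, hl', hj, ← Category.assoc, hχ]
  abel

lemma inIdeal_of_comp_syzygy (cp : CotorsionPair E C K) (hxy : E.isSES x y)
    (h₀ : E.isSES ι₀ p₀) (h₁ : E.isSES ι₁ p₁) (hQ₀ : Q₀ ∈ K) (hQ₁ : E.Proj Q₁)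
    (hX : ∀ ⦃U : B⦄, U ∈ C → ∀ χ : U ⟶ X, FactorsThru E.projObjs χ)
    (hm : m ≫ p₁ = p₀ ≫ y) (hω : ω ≫ ι₁ = ι₀ ≫ m) (hl : l ≫ y = p₁)
    {W : B} {v : W ⟶ W₀} (hv : InIdeal K (v ≫ ω)) : InIdeal K v := by
  obtain ⟨V, U, κ, μ, hU, hV, hκ⟩ := cp.coresolve W
  obtain ⟨b, hb⟩ := hv.exists_extension hκ (cp.ext hU)
  obtain ⟨t, ht⟩ := hκ.exists_extension (cp.ext hU hQ₀) (v ≫ ι₀)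
  obtain ⟨φ, hφ⟩ := hκ.exists_desc (t ≫ p₀) (by
    rw [reassoc_of% ht, h₀.comp_eq_zero, comp_zero])
  obtain ⟨ψ, hψ⟩ := hκ.exists_desc (t ≫ m - b ≫ ι₁) (by
    rw [Preadditive.comp_sub, reassoc_of% ht, reassoc_of% hb, hω, sub_self])
  obtain ⟨s, hs⟩ := exists_lift_of_comp_eq hxy h₀ hQ₁ hl (hX hU) (ρ := φ) (ψ := ψ)
    (hκ.cancel_epi (by
      rw [reassoc_of% hφ, reassoc_of% hψ, Preadditive.sub_comp, Category.assoc, Category.assoc,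
        hm, h₁.comp_eq_zero, comp_zero, sub_zero]))
  obtain ⟨e, he⟩ := h₀.exists_lift (t - μ ≫ s) (by
    rw [Preadditive.sub_comp, Category.assoc, hs, hφ, sub_self])
  have : κ ≫ e = v := h₀.cancel_mono (by
    rw [Category.assoc, he, Preadditive.comp_sub, reassoc_of% hκ.comp_eq_zero, zero_comp,
      sub_zero, ht])
  rw [← this]
  exact .of hV _ _

lemma exists_desc_connecting (hxy : E.isSES x y) (h₀ : E.isSES ι₀ p₀) (h₁ : E.isSES ι₁ p₁)
    (hC₀ : ∀ ⦃Y : B⦄, Y ∈ K → E.Ext1Zero C₀ Y) (hQ₁ : Q₁ ∈ K) (hm : m ≫ p₁ = p₀ ≫ y)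
    (hω : ω ≫ ι₁ = ι₀ ≫ m) (hl : l ≫ y = p₁) (hθ : θ ≫ x = ι₁ ≫ l)
    {M : B} {t : W₁ ⟶ M} (ht : InIdeal K (ω ≫ t)) : ∃ u : X ⟶ M, InIdeal K (θ ≫ u - t) := by
  obtain ⟨h, hh⟩ := ht.exists_extension h₀ hC₀
  obtain ⟨Y, i', d', g, hY, hg, hgd⟩ := E.pushout_infl h₁ t
  obtain ⟨ρ, hρ⟩ := h₀.exists_desc (m ≫ g - h ≫ i') (by
    rw [Preadditive.comp_sub, ← Category.assoc, ← hω, reassoc_of% hh, Category.assoc, hg,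
      sub_self])
  have hρd : ρ ≫ d' = y := h₀.cancel_epi (by
    rw [reassoc_of% hρ, Preadditive.sub_comp, Category.assoc, hgd, hm, Category.assoc,
      hY.comp_eq_zero, comp_zero, sub_zero])
  obtain ⟨u, hu⟩ := hY.exists_lift (x ≫ ρ) (by rw [Category.assoc, hρd, hxy.comp_eq_zero])
  obtain ⟨k, hk⟩ := hY.exists_lift (l ≫ ρ - g) (by
    rw [Preadditive.sub_comp, Category.assoc, hρd, hl, hgd, sub_self])
  refine ⟨u, ?_⟩
  have : ι₁ ≫ k = θ ≫ u - t := hY.cancel_mono (by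
    rw [Category.assoc, hk, Preadditive.comp_sub, ← Category.assoc, ← hθ, Preadditive.sub_comp,
      Category.assoc, Category.assoc, hu, hg])
  rw [← this]
  exact .of hQ₁ _ _

section Quotient

variable [Abelian (QuotCat K)]

lemma inIdeal_inr_comp_of_epi {A V Z N : B} {κ : A ⟶ V} (hV : V ∈ K) {e : A ⟶ Z}
    [Epi ((π K).map e)] {D : V ⊞ Z ⟶ N} (hD : E.isSES (biprod.lift κ e) D) :
    InIdeal K (biprod.inr ≫ D) := by
  have hsum : κ ≫ biprod.inl ≫ D + e ≫ biprod.inr ≫ D = 0 := by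
    rw [← hD.comp_eq_zero, biprod.lift_eq]; simp
  have he : InIdeal K (e ≫ biprod.inr ≫ D) := by
    rw [eq_neg_of_add_eq_zero_right hsum]; exact (InIdeal.of hV _ _).neg
  rw [← QuotCat.map_eq_zero_iff, Functor.map_comp] at he
  rw [← QuotCat.map_eq_zero_iff]
  exact (cancel_epi _).1 (he.trans comp_zero.symm)

lemma projective_obj (cp : CotorsionPair E C K) {W Q U : B} {ι : W ⟶ Q}
    {p : Q ⟶ U} (h : E.isSES ι p) (hQ : E.Proj Q) (hQK : Q ∈ K) (hU : U ∈ C) :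
    Projective ((π K).obj W) := by
  refine ⟨fun {T Z} f e he => ?_⟩
  obtain ⟨f, rfl⟩ := (π K).map_surjective f
  obtain ⟨e, rfl⟩ := (π K).map_surjective e
  obtain ⟨V, _, κ, μ, -, hV, hκ⟩ := cp.coresolve T.as
  obtain ⟨N, D, hD⟩ := ExactStr.exists_isSES_biprod_lift hκ e
  obtain ⟨h₁, hh₁⟩ := ((inIdeal_inr_comp_of_epi hV hD).comp_left f).exists_extension h (cp.ext hU)
  obtain ⟨h₂, hh₂⟩ := hQ _ _ hD h₁
  obtain ⟨g, hg⟩ := hD.exists_lift (f ≫ biprod.inr - ι ≫ h₂) (by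
    rw [Preadditive.sub_comp, Category.assoc, Category.assoc, hh₂, hh₁, sub_self])
  have hge : g ≫ e - f = -(ι ≫ h₂ ≫ biprod.snd) := by
    calc g ≫ e - f = (g ≫ biprod.lift κ e) ≫ biprod.snd -
          (f ≫ (biprod.inr : Z.as ⟶ V ⊞ Z.as)) ≫ biprod.snd := by
          simp
      _ = -(ι ≫ h₂ ≫ biprod.snd) := by rw [hg]; simp
  refine ⟨(π K).map g, ?_⟩
  rw [← Functor.map_comp, QuotCat.map_eq_map_iff, hge]
  exact (InIdeal.of hQK _ _).neg

end Quotient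

end

end

theorem stmt15_general (E : ExactStr B) (hEP : E.EnoughProj)
    (C K : Set B) (hFR : FullyRigid E C K) [Abelian (QuotCat K)]
    (X : B) (hX : X ∈ E.CoCone C C)
    (hpd1 : E.pdLE 1 X) :
    pdLEQ 1 ((Quotient.functor (quotRel K)).obj X) := by
  obtain ⟨C₀, C₁, x, y, hC₀, hC₁, hxy⟩ := hX
  obtain ⟨Q₀, W₀, ι₀, p₀, hQ₀, h₀⟩ := hEP C₀
  obtain ⟨Q₁, W₁, ι₁, p₁, hQ₁, h₁⟩ := hEP C₁
  obtain ⟨m, hm⟩ := hQ₀ _ _ h₁ (p₀ ≫ y)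
  obtain ⟨ω, hω⟩ := h₁.exists_lift (ι₀ ≫ m) (by
    rw [Category.assoc, hm, reassoc_of% h₀.comp_eq_zero, zero_comp])
  obtain ⟨l, hl⟩ := hQ₁ _ _ hxy p₁
  obtain ⟨θ, hθ⟩ := hxy.exists_lift (ι₁ ≫ l) (by rw [Category.assoc, hl, h₁.comp_eq_zero])
  have hQ₀K := hFR.proj_mem hQ₀
  have hQ₁K := hFR.proj_mem hQ₁
  have hXC : ∀ ⦃U : B⦄, U ∈ C → ∀ χ : U ⟶ X, FactorsThru E.projObjs χ := fun _ hU =>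
    ExactStr.factorsThru_proj_of_pdLE_one hpd1 fun _ hP => hFR.cp.ext hU (hFR.proj_mem hP)
  have hcomp := inIdeal_comp_syzygy hxy h₀ hQ₀K hm hω hl hθ
  exact ⟨_, _, _, _, QuotCat.map_comp_map_eq_zero hcomp,
    projective_obj hFR.cp h₁ hQ₁ hQ₁K hC₁,
    QuotCat.shortExact_map hcomp
      (fun _ _ => inIdeal_of_comp_syzygy hFR.cp hxy h₀ h₁ hQ₀K hQ₁ hXC hm hω hl)
      (fun _ _ => inIdeal_of_connecting_comp hxy h₁ (hFR.subset hC₀) (hFR.cp.ext hC₁) hl hθ)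
      (fun _ _ => exists_desc_connecting hxy h₀ h₁ (hFR.cp.ext hC₀) hQ₁K hm hω hl hθ),
    projective_obj hFR.cp h₀ hQ₀ hQ₀K hC₀⟩

/-- Lemma 5.1: if `X ∈ H_K` has projective dimension `1` in `B`, then
`pd_{B/K} X ≤ 1`. -/
theorem stmt15 (k : Type*) [Field k] [Linear k B]
    (E : ExactStr B) (hKS : IsKrullSchmidt (B := B)) (hEP : E.EnoughProj) (hEI : E.EnoughInj)
    (C K : Set B) (hFR : FullyRigid E C K) [Abelian (QuotCat K)]
    (X : B) (hX : X ∈ E.CoCone C C) (hXK : NoSummandIn K X)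
    (hpd1 : E.pdLE 1 X) (hpd0 : ¬ E.pdLE 0 X) :
    pdLEQ 1 ((Quotient.functor (quotRel K)).obj X) :=
  stmt15_general E hEP C K hFR X hX hpd1
end
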